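/- Let Γ ≤ S_n be a permutation group, V an invariant subspace of Γ, and z ∈ Z^n with Σ_i z_i = k. Assume z has locally minimal projection onto V, meaning ‖π_V(z)‖ ≤ ‖π_V(z')‖ for all integral z' with Σ_i z'_i = k and ‖z'‖ ≤ ‖z‖. Then z is a core point for Γ if and only if z is a core point for the stabilizer subgroup stab_Γ(π_V(z)). -/

import Mathlib

noncomputable section

open scoped RealInnerProductSpace

def permAct {n : ℕ} (γ : Equiv.Perm (Fin n)) (x : EuclideanSpace ℝ (Fin n)) :
    EuclideanSpace ℝ (Fin n) := WithLp.toLp 2 (fun i => x (γ⁻¹ i))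

def allOnes (n : ℕ) : EuclideanSpace ℝ (Fin n) := WithLp.toLp 2 (fun _ => 1)

def intVec {n : ℕ} (z : Fin n → ℤ) : EuclideanSpace ℝ (Fin n) := WithLp.toLp 2 (fun i => (z i : ℝ))

def orbitSet {n : ℕ} (Γ : Subgroup (Equiv.Perm (Fin n))) (x : EuclideanSpace ℝ (Fin n)) :
    Set (EuclideanSpace ℝ (Fin n)) := {y | ∃ γ ∈ Γ, y = permAct γ x}

def IsCorePoint {n : ℕ} (Γ : Subgroup (Equiv.Perm (Fin n))) (z : Fin n → ℤ) : Prop :=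
  ∀ y : Fin n → ℤ, intVec y ∈ convexHull ℝ (orbitSet Γ (intVec z)) →
    intVec y ∈ orbitSet Γ (intVec z)

def stabSub {n : ℕ} (Γ : Subgroup (Equiv.Perm (Fin n))) (v : EuclideanSpace ℝ (Fin n)) :
    Subgroup (Equiv.Perm (Fin n)) where
  carrier := {γ | γ ∈ Γ ∧ permAct γ v = v}
  one_mem' := ⟨Γ.one_mem, rfl⟩
  mul_mem' := fun {a b} ha hb => ⟨Γ.mul_mem ha.1 hb.1, by
    have h : permAct (a * b) v = permAct a (permAct b v) := rfl
    rw [h, hb.2, ha.2]⟩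
  inv_mem' := fun {a} ha => ⟨Γ.inv_mem ha.1, by
    conv_lhs => rw [← ha.2]
    have h : permAct a⁻¹ (permAct a v) = permAct (a⁻¹ * a) v := rfl
    rw [h, inv_mul_cancel]; rfl⟩

/-!
Write `π` for the orthogonal projection onto `V` and `v = π z`. Since `π` commutes with `Γ` and
`Γ` acts by isometries, `π` maps the orbit `Γ z` onto the orbit `Γ v`, which lies on the sphere of
radius `‖v‖`. A point `y` of `conv (Γ z)` has the coordinate sum of `z` and `‖y‖ ≤ ‖z‖`, so local
minimality gives `‖π y‖ ≥ ‖v‖`; by strict convexity of `‖·‖²`, `y` is then a convex combination of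
orbit points `γ z` with `π (γ z) = π y = γ₀ v`, that is, of points of `γ₀ • (stab v) z`.
Conversely, all of `(stab v) z` projects to `v`, so if `y = γ z` lies in its hull then `γ`
fixes `v`.
-/

lemma strictConvexOn_norm_sq {E : Type*} [NormedAddCommGroup E] [InnerProductSpace ℝ E] :
    StrictConvexOn ℝ Set.univ (fun x : E => ‖x‖ ^ 2) := by
  refine (strongConvexOn_iff_convex (m := 2).2 ?_).strictConvexOn two_pos
  simpa using convexOn_const (0 : ℝ) convex_univ

lemma mem_convexHull_fiber_of_le_norm {E F : Type*} [AddCommGroup E] [Module ℝ E]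
    [NormedAddCommGroup F] [InnerProductSpace ℝ F] (L : E →ₗ[ℝ] F) {s : Set E} {r : ℝ}
    (hs : ∀ a ∈ s, ‖L a‖ ≤ r) {y : E} (hy : y ∈ convexHull ℝ s) (hr : r ≤ ‖L y‖) :
    y ∈ convexHull ℝ {a ∈ s | L a = L y} := by
  classical
  obtain ⟨ι, _, w, p, hw₀, hw₁, hp, rfl⟩ := mem_convexHull_iff_exists_fintype.1 hy
  have hLy : L (∑ i, w i • p i) = ∑ i, w i • L (p i) := by simp
  -- equality in Jensen's inequality for the strictly convex `‖·‖ ^ 2`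
  have hjensen : ‖∑ i, w i • L (p i)‖ ^ 2 = ∑ i, w i • ‖L (p i)‖ ^ 2 := by
    refine le_antisymm (strictConvexOn_norm_sq.convexOn.map_sum_le (fun i _ => hw₀ i) hw₁
      (fun _ _ => Set.mem_univ _)) ?_
    calc ∑ i, w i • ‖L (p i)‖ ^ 2 ≤ ∑ i, w i • ‖∑ i, w i • L (p i)‖ ^ 2 := by
          gcongr with i
          · exact hw₀ i
          · exact (hs _ (hp i)).trans (hLy ▸ hr)
      _ = ‖∑ i, w i • L (p i)‖ ^ 2 := by rw [← Finset.sum_smul, hw₁, one_smul]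
  have hfiber := (strictConvexOn_norm_sq.map_sum_eq_iff' (fun i _ => hw₀ i) hw₁
    (fun _ _ => Set.mem_univ _)).1 hjensen
  set t := Finset.univ.filter (fun i => w i ≠ 0)
  have ht : ∑ i ∈ t, w i = 1 := (Finset.sum_filter_ne_zero _).trans hw₁
  have hsum : ∑ i ∈ t, w i • p i = ∑ i, w i • p i :=
    Finset.sum_filter_of_ne fun i _ h => left_ne_zero_of_smul h
  have hmem : ∀ i ∈ t, p i ∈ {a ∈ s | L a = L (∑ i, w i • p i)} := fun i hi =>
    ⟨hp i, hLy ▸ hfiber i (Finset.mem_univ i) (Finset.mem_filter.1 hi).2⟩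
  have := t.centerMass_mem_convexHull (fun i _ => hw₀ i) (by rw [ht]; exact one_pos) hmem
  rwa [Finset.centerMass_eq_of_sum_1 _ _ ht, hsum] at this

section Permutation

variable {n : ℕ}

def permIso (γ : Equiv.Perm (Fin n)) :
    EuclideanSpace ℝ (Fin n) ≃ₗᵢ[ℝ] EuclideanSpace ℝ (Fin n) :=
  LinearIsometryEquiv.piLpCongrLeft 2 ℝ ℝ γ

lemma permIso_apply (γ : Equiv.Perm (Fin n)) (x : EuclideanSpace ℝ (Fin n)) :
    permIso γ x = permAct γ x := rfl

lemma permAct_mul (a b : Equiv.Perm (Fin n)) (x : EuclideanSpace ℝ (Fin n)) :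
    permAct (a * b) x = permAct a (permAct b x) := rfl

lemma permAct_inv_permAct (γ : Equiv.Perm (Fin n)) (x : EuclideanSpace ℝ (Fin n)) :
    permAct γ⁻¹ (permAct γ x) = x := by
  rw [← permAct_mul, inv_mul_cancel]
  rfl

lemma permAct_permAct_inv (γ : Equiv.Perm (Fin n)) (x : EuclideanSpace ℝ (Fin n)) :
    permAct γ (permAct γ⁻¹ x) = x := by
  simpa using permAct_inv_permAct γ⁻¹ x

lemma norm_permAct (γ : Equiv.Perm (Fin n)) (x : EuclideanSpace ℝ (Fin n)) :
    ‖permAct γ x‖ = ‖x‖ :=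
  (permIso γ).norm_map x

lemma permAct_intVec (γ : Equiv.Perm (Fin n)) (y : Fin n → ℤ) :
    permAct γ (intVec y) = intVec (fun i => y (γ⁻¹ i)) := rfl

lemma sum_permAct (γ : Equiv.Perm (Fin n)) (x : EuclideanSpace ℝ (Fin n)) :
    ∑ i, permAct γ x i = ∑ i, x i :=
  Equiv.sum_comp γ⁻¹ x

lemma starProjection_permAct {Γ : Subgroup (Equiv.Perm (Fin n))}
    {V : Submodule ℝ (EuclideanSpace ℝ (Fin n))} (hV : ∀ γ ∈ Γ, ∀ v ∈ V, permAct γ v ∈ V)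
    {γ : Equiv.Perm (Fin n)} (hγ : γ ∈ Γ) (x : EuclideanSpace ℝ (Fin n)) :
    V.starProjection (permAct γ x) = permAct γ (V.starProjection x) := by
  have hmap : V.map ((permIso γ).toLinearEquiv : _ →ₗ[ℝ] _) = V := by
    refine le_antisymm (Submodule.map_le_iff_le_comap.2 fun v hv => hV γ hγ v hv) fun v hv => ?_
    exact ⟨permAct γ⁻¹ v, hV _ (Γ.inv_mem hγ) v hv, permAct_permAct_inv γ v⟩
  have := Submodule.starProjection_map_apply (permIso γ) V (permIso γ x)
  simp only [hmap, LinearIsometryEquiv.symm_apply_apply] at this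
  exact this

end Permutation

section Orbit

variable {n : ℕ} {Γ : Subgroup (Equiv.Perm (Fin n))}

lemma orbitSet_mono {Δ : Subgroup (Equiv.Perm (Fin n))} (h : Δ ≤ Γ)
    (w : EuclideanSpace ℝ (Fin n)) : orbitSet Δ w ⊆ orbitSet Γ w := by
  rintro _ ⟨γ, hγ, rfl⟩
  exact ⟨γ, h hγ, rfl⟩

lemma stabSub_le (v : EuclideanSpace ℝ (Fin n)) : stabSub Γ v ≤ Γ := fun _ hγ => hγ.1

lemma sum_intVec (y : Fin n → ℤ) : ∑ i, intVec y i = ((∑ i, y i : ℤ) : ℝ) := by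
  simp [intVec]

lemma norm_le_of_mem_convexHull_orbitSet {w x : EuclideanSpace ℝ (Fin n)}
    (hx : x ∈ convexHull ℝ (orbitSet Γ w)) : ‖x‖ ≤ ‖w‖ := by
  have hball : convexHull ℝ (orbitSet Γ w) ⊆ Metric.closedBall 0 ‖w‖ :=
    convexHull_min (by rintro _ ⟨γ, -, rfl⟩; simp [norm_permAct]) (convex_closedBall 0 _)
  simpa using hball hx

lemma sum_eq_of_mem_convexHull_orbitSet {w x : EuclideanSpace ℝ (Fin n)}
    (hx : x ∈ convexHull ℝ (orbitSet Γ w)) : ∑ i, x i = ∑ i, w i := by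
  have hlin : IsLinearMap ℝ (fun x : EuclideanSpace ℝ (Fin n) => ∑ i, x i) :=
    ⟨fun a b => by simp [Finset.sum_add_distrib], fun c a => by simp [Finset.mul_sum]⟩
  refine convexHull_min (t := {x | ∑ i, x i = ∑ i, w i}) ?_ (convex_hyperplane hlin _) hx
  rintro _ ⟨γ, -, rfl⟩
  exact sum_permAct γ w

variable {V : Submodule ℝ (EuclideanSpace ℝ (Fin n))}

lemma starProjection_eq_of_mem_convexHull_orbitSet_stabSub
    (hV : ∀ γ ∈ Γ, ∀ v ∈ V, permAct γ v ∈ V) {w x : EuclideanSpace ℝ (Fin n)}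
    (hx : x ∈ convexHull ℝ (orbitSet (stabSub Γ (V.starProjection w)) w)) :
    V.starProjection x = V.starProjection w := by
  refine convexHull_min (t := V.starProjection.toLinearMap ⁻¹' {V.starProjection w}) ?_
    ((convex_singleton _).linear_preimage _) hx
  rintro _ ⟨γ, hγ, rfl⟩
  exact (starProjection_permAct hV hγ.1 w).trans hγ.2

end Orbit

section CorePoint

variable {n : ℕ} {Γ : Subgroup (Equiv.Perm (Fin n))} {V : Submodule ℝ (EuclideanSpace ℝ (Fin n))}
  {z : Fin n → ℤ}

lemma isCorePoint_stabSub_of_isCorePoint (hV : ∀ γ ∈ Γ, ∀ v ∈ V, permAct γ v ∈ V)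
    (hcore : IsCorePoint Γ z) : IsCorePoint (stabSub Γ (V.starProjection (intVec z))) z := by
  intro y hy
  obtain ⟨γ, hγ, hyz⟩ := hcore y (convexHull_mono (orbitSet_mono (stabSub_le _) _) hy)
  refine ⟨γ, ⟨hγ, ?_⟩, hyz⟩
  rw [← starProjection_permAct hV hγ, ← hyz]
  exact starProjection_eq_of_mem_convexHull_orbitSet_stabSub hV hy

lemma isCorePoint_of_isCorePoint_stabSub (hV : ∀ γ ∈ Γ, ∀ v ∈ V, permAct γ v ∈ V)
    (hmin : ∀ y : Fin n → ℤ, ∑ i, y i = ∑ i, z i → ‖intVec y‖ ≤ ‖intVec z‖ →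
      ‖V.starProjection (intVec z)‖ ≤ ‖V.starProjection (intVec y)‖)
    (hcore : IsCorePoint (stabSub Γ (V.starProjection (intVec z))) z) : IsCorePoint Γ z := by
  intro y hy
  have hproj : ‖V.starProjection (intVec z)‖ ≤ ‖V.starProjection (intVec y)‖ := by
    refine hmin y ?_ (norm_le_of_mem_convexHull_orbitSet hy)
    exact_mod_cast (sum_intVec y).symm.trans
      ((sum_eq_of_mem_convexHull_orbitSet hy).trans (sum_intVec z))
  have hfiber := mem_convexHull_fiber_of_le_norm V.starProjection.toLinearMap
    (fun a ha => by obtain ⟨γ, hγ, rfl⟩ := ha; simp [starProjection_permAct hV hγ, norm_permAct])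
    hy hproj
  obtain ⟨_, ⟨γ₀, hγ₀, rfl⟩,
    hγ₀y : V.starProjection (permAct γ₀ (intVec z)) = V.starProjection (intVec y)⟩ :=
    convexHull_nonempty_iff.1 ⟨_, hfiber⟩
  have hsub : permIso γ₀⁻¹ '' {a ∈ orbitSet Γ (intVec z) |
      V.starProjection a = V.starProjection (intVec y)} ⊆
      orbitSet (stabSub Γ (V.starProjection (intVec z))) (intVec z) := by
    rintro _ ⟨_, ⟨⟨γ, hγ, rfl⟩, ha⟩, rfl⟩
    refine ⟨γ₀⁻¹ * γ, ⟨Γ.mul_mem (Γ.inv_mem hγ₀) hγ, ?_⟩, rfl⟩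
    rw [permAct_mul, ← starProjection_permAct hV hγ, ha, ← hγ₀y,
      starProjection_permAct hV hγ₀, permAct_inv_permAct]
  have hy₀ : intVec (fun i => y (γ₀ i)) ∈
      convexHull ℝ (orbitSet (stabSub Γ (V.starProjection (intVec z))) (intVec z)) := by
    refine convexHull_mono hsub ?_
    rw [← IsLinearMap.image_convexHull (f := permIso γ₀⁻¹) (permIso γ₀⁻¹).toLinearMap.isLinear]
    exact ⟨_, hfiber, by simp [permIso_apply, permAct_intVec]⟩
  obtain ⟨s, hs, hsz⟩ := hcore _ hy₀
  refine ⟨γ₀ * s, Γ.mul_mem hγ₀ hs.1, ?_⟩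
  rw [permAct_mul, ← hsz, ← inv_inv γ₀, ← permAct_intVec, inv_inv, permAct_permAct_inv]

end CorePoint

theorem stmt9 {n : ℕ} (Γ : Subgroup (Equiv.Perm (Fin n)))
    (V : Submodule ℝ (EuclideanSpace ℝ (Fin n)))
    (hV : ∀ γ ∈ Γ, ∀ v ∈ V, permAct γ v ∈ V)
    (z : Fin n → ℤ) (k : ℤ) (hk : ∑ i, z i = k)
    (hmin : ∀ z' : Fin n → ℤ, ∑ i, z' i = k → ‖intVec z'‖ ≤ ‖intVec z‖ →
      ‖(V.orthogonalProjectionOnto (intVec z) : EuclideanSpace ℝ (Fin n))‖ ≤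
        ‖(V.orthogonalProjectionOnto (intVec z') : EuclideanSpace ℝ (Fin n))‖) :
    IsCorePoint Γ z ↔
      IsCorePoint (stabSub Γ (V.orthogonalProjectionOnto (intVec z) : EuclideanSpace ℝ (Fin n))) z := by
  simp only [← Submodule.starProjection_apply] at hmin ⊢
  exact ⟨isCorePoint_stabSub_of_isCorePoint hV,
    isCorePoint_of_isCorePoint_stabSub hV fun y hy => hmin y (hy.trans hk)⟩
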